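/- Under the identification of each F3-admissible tuple t with its related tuple T(t), where T(r, a, δφ, δF, δφF) = (19 − r, a + 2δF − 1, δφF, 1 − δF, δφ), the set of F3-admissible tuples has exactly 51 equivalence classes (pairs {t, T(t)}). (These 51 classes label the connected components of moduli of real non-singular curves A ∈ |−2K_{F₃}|, identifying related pairs of positive curves.) -/

import Mathlib

/-- The invariants `(r, a, δφ, δF, δφF)` of the paper, with `r, a` integers and
`δφ, δF, δφF ∈ {0,1}`, satisfying conditions 0.1--0.7 and I.1--I.8 of the
`𝔽₃` case. -/
def F3Admissible : ℤ × ℤ × ℤ × ℤ × ℤ → Prop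
  | (r, a, dphi, dF, dphiF) =>
    (dphi = 0 ∨ dphi = 1) ∧ (dF = 0 ∨ dF = 1) ∧ (dphiF = 0 ∨ dphiF = 1) ∧
    (1 ≤ r ∧ r ≤ 18) ∧ (0 ≤ a ∧ a ≤ r ∧ a ≤ 20 - r) ∧
    (r + a ≡ 0 [ZMOD 2]) ∧ (dphi = 0 → r ≡ 2 [ZMOD 4]) ∧
    (a = 0 → dphi = 0 ∧ r ≡ 2 [ZMOD 8]) ∧
    (a = 1 → (r ≡ 1 [ZMOD 8] ∨ r ≡ 3 [ZMOD 8])) ∧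
    (a = 2 ∧ r ≡ 6 [ZMOD 8] → dphi = 0) ∧
    (a = r ∧ dphi = 0 → r ≡ 2 [ZMOD 8]) ∧
    (a = 20 - r ∧ dphi = 0 → r ≡ 2 [ZMOD 8]) ∧
    (dF = 0 → dphi = 1) ∧
    (dphiF = 0 → dF = 0 ∧ dphi = 1 ∧ r ≡ 1 [ZMOD 4]) ∧
    (a = 20 - r → dF = 0) ∧
    (a = 20 - r ∧ dphiF = 0 → r ≡ 1 [ZMOD 8]) ∧
    (a = 0 → dF = 1) ∧
    (a = 1 ∧ dF = 0 → dphiF = 0 ∧ r ≡ 1 [ZMOD 8]) ∧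
    (a = 2 ∧ dF = 0 → (r ≡ 0 [ZMOD 8] ∨ r ≡ 2 [ZMOD 8])) ∧
    (a = 3 ∧ dF = 0 ∧ r ≡ 5 [ZMOD 8] → dphiF = 0)


/-- The map `T(r, a, δφ, δF, δφF) = (19 − r, a + 2δF − 1, δφF, 1 − δF, δφ)`
encoding the passage from `φ` to the related involution `φ̃ = τφ`. -/
def F3Related : ℤ × ℤ × ℤ × ℤ × ℤ → ℤ × ℤ × ℤ × ℤ × ℤ
  | (r, a, dphi, dF, dphiF) => (19 - r, a + 2 * dF - 1, dphiF, 1 - dF, dphi)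

/-!
`T` is an involution that preserves admissibility and sends `r` to `19 - r`, so every pair
`{t, T t}` has exactly one member with `r ≤ 9`. The pairs are therefore counted by the admissible
tuples with `r ≤ 9`, and a finite enumeration finds 51 of them.
-/

theorem Function.Involutive.ncard_pairs_eq_ncard_transversal {α : Type*} {f : α → α}
    (hf : Function.Involutive f) {P : α → Prop} (hP : ∀ x, P x → P (f x)) {c : α → Prop}
    (hc : ∀ x, c (f x) ↔ ¬ c x) :
    {p : Set α | ∃ t, P t ∧ p = {t, f t}}.ncard = {t | P t ∧ c t}.ncard := by
  have himage :
      {p : Set α | ∃ t, P t ∧ p = {t, f t}} = (fun t ↦ {t, f t}) '' {t | P t ∧ c t} := by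
    ext p
    constructor
    · rintro ⟨t, ht, rfl⟩
      by_cases hct : c t
      · exact ⟨t, ⟨ht, hct⟩, rfl⟩
      · refine ⟨f t, ⟨hP t ht, (hc t).2 hct⟩, ?_⟩
        simp only [hf t, Set.pair_comm]
    · rintro ⟨t, ⟨ht, -⟩, rfl⟩
      exact ⟨t, ht, rfl⟩
  rw [himage, Set.InjOn.ncard_image]
  rintro t ⟨-, hct⟩ u ⟨-, hcu⟩ (htu : ({t, f t} : Set α) = {u, f u})
  have : t ∈ ({u, f u} : Set α) := htu ▸ Set.mem_insert t {f t}
  rcases this with rfl | rfl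
  · rfl
  · exact absurd hcu ((hc u).1 hct)

theorem F3Related_involutive : Function.Involutive F3Related
  | (r, a, dphi, dF, dphiF) => by
    simp only [F3Related, Prod.mk.injEq, and_true, true_and]
    omega

theorem F3Related_fst : ∀ t, (F3Related t).1 = 19 - t.1
  | (_, _, _, _, _) => rfl

instance : DecidablePred F3Admissible
  | (r, a, dphi, dF, dphiF) => by unfold F3Admissible; infer_instance

noncomputable def F3Box : Finset (ℤ × ℤ × ℤ × ℤ × ℤ) :=
  Finset.Icc 1 18 ×ˢ Finset.Icc 0 10 ×ˢ Finset.Icc 0 1 ×ˢ Finset.Icc 0 1 ×ˢ Finset.Icc 0 1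

theorem F3Admissible.mem_box : ∀ {t}, F3Admissible t → t ∈ F3Box
  | (r, a, dphi, dF, dphiF), h => by
    obtain ⟨hφ, hF, hφF, hr, ha, -, -⟩ := h
    simp only [F3Box, Finset.mem_product, Finset.mem_Icc]
    omega

set_option maxRecDepth 10000 in
theorem F3Admissible.related {t} (ht : F3Admissible t) : F3Admissible (F3Related t) := by
  have hbox : ∀ t ∈ F3Box, F3Admissible t → F3Admissible (F3Related t) := by decide
  exact hbox t ht.mem_box ht

theorem ncard_setOf_F3Admissible_fst_le_nine : {t | F3Admissible t ∧ t.1 ≤ 9}.ncard = 51 := by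
  have hfin : {t | F3Admissible t ∧ t.1 ≤ 9} =
      ↑((F3Box.filter F3Admissible).filter (·.1 ≤ 9)) := by
    ext t
    rw [Set.mem_ofPred_eq, Finset.mem_coe, Finset.mem_filter, Finset.mem_filter]
    exact ⟨fun h ↦ ⟨⟨h.1.mem_box, h.1⟩, h.2⟩, fun h ↦ ⟨h.1.2, h.2⟩⟩
  rw [hfin, Set.ncard_coe_finset]
  decide

/-- Identifying each `𝔽₃`-admissible tuple `t` with its related tuple `T t`,
there are exactly 51 equivalence classes (pairs `{t, T t}`): these label the
connected components of moduli of real non-singular curves `A ∈ |-2K_{𝔽₃}|`. -/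
theorem card_F3Admissible_pairs :
    Set.ncard {p : Set (ℤ × ℤ × ℤ × ℤ × ℤ) |
      ∃ t : ℤ × ℤ × ℤ × ℤ × ℤ, F3Admissible t ∧ p = {t, F3Related t}} = 51 := by
  have hswap : ∀ t, (F3Related t).1 ≤ 9 ↔ ¬ t.1 ≤ 9 := fun t ↦ by rw [F3Related_fst]; omega
  rw [F3Related_involutive.ncard_pairs_eq_ncard_transversal (P := F3Admissible) (c := (·.1 ≤ 9))
    (fun _ ↦ F3Admissible.related) hswap]
  exact ncard_setOf_F3Admissible_fst_le_nine
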